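/- arXiv:1010.0999 — 3 statements merged into one kernel-verified Lean document; each statement's English description precedes it below -/
import Mathlib

section
/- Let G be a σ-compact locally compact group, K a compact normal subgroup of G, and π : G → G/K the canonical quotient map. If A ⊆ G satisfies A = AK, then A is Haar measurable in G if and only if π(A) is Haar measurable in G/K. -/
/-!
All Haar measures on a σ-compact group are proportional, so we may work with `μ₀ = haar` and its
pushforward `ν₀ = μ₀.map π`, which is a Haar measure because `π` is proper (`K` is compact).
Since `π` is a closed map and `μ₀` is outer regular, `ν₀ T = μ₀ (π ⁻¹' T)` for every `T`.
If `A = AK` is null measurable, it is a σ-compact set `C` plus a null set; `π '' C` is σ-compact,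
hence measurable, and `π '' A \ π '' C` has `ν₀`-measure `μ₀ (A \ CK) = 0`. The converse is
pulling back along the measurable map `π`, using `π ⁻¹' (π '' A) = AK = A`.
-/

open MeasureTheory Measure Set Filter Topology Pointwise

theorem IsSigmaCompact.measurableSet {X : Type*} [TopologicalSpace X] [T2Space X]
    [MeasurableSpace X] [OpensMeasurableSpace X] {s : Set X} (hs : IsSigmaCompact s) :
    MeasurableSet s := by
  obtain ⟨K, hK, rfl⟩ := hs
  exact .iUnion fun n => (hK n).isClosed.measurableSet

theorem QuotientGroup.isProperMap_coe {G : Type*} [Group G] [TopologicalSpace G]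
    [IsTopologicalGroup G] {H : Subgroup G} (hH : IsCompact (H : Set G)) :
    IsProperMap ((↑) : G → G ⧸ H) := by
  refine isProperMap_iff_isClosedMap_and_compact_fibers.2
    ⟨continuous_quot_mk, isClosedMap_coe hH, fun y => ?_⟩
  obtain ⟨g, rfl⟩ := mk_surjective y
  rw [← image_singleton, preimage_image_mk_eq_mul]
  exact isCompact_singleton.mul hH

section Haar

variable {G : Type*} [Group G] [TopologicalSpace G] [IsTopologicalGroup G]
  [LocallyCompactSpace G] [SigmaCompactSpace G] [MeasurableSpace G] [BorelSpace G]

theorem MeasureTheory.Measure.isHaarMeasure_eq_smul_of_sigmaCompactSpace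
    (μ' μ : Measure G) [IsHaarMeasure μ'] [IsHaarMeasure μ] :
    μ' = haarScalarFactor μ' μ • μ := by
  rw [ext_iff_of_iUnion_eq_univ (iUnion_compactCovering G)]
  intro n
  ext s hs
  rw [restrict_smul, smul_apply, restrict_apply hs, restrict_apply hs]
  exact measure_isMulInvariant_eq_smul_of_isCompact_closure μ' μ
    ((isCompact_compactCovering G n).closure_of_subset inter_subset_right)

theorem MeasureTheory.Measure.nullMeasurableSet_iff_of_isHaarMeasure
    (μ ν : Measure G) [IsHaarMeasure μ] [IsHaarMeasure ν] {s : Set G} :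
    NullMeasurableSet s μ ↔ NullMeasurableSet s ν := by
  constructor <;> intro hs <;> refine hs.mono_ac ?_
  · rw [isHaarMeasure_eq_smul_of_sigmaCompactSpace ν μ]
    exact smul_absolutelyContinuous
  · rw [isHaarMeasure_eq_smul_of_sigmaCompactSpace μ ν]
    exact smul_absolutelyContinuous

end Haar

section Regular

variable {X Y : Type*} [TopologicalSpace X] [MeasurableSpace X] [BorelSpace X]
  [TopologicalSpace Y] [MeasurableSpace Y] [BorelSpace Y] {μ : Measure X}

theorem MeasurableSet.exists_isSigmaCompact_subset_measure_sdiff_eq_zero_of_isFiniteMeasure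
    [T2Space X] [IsFiniteMeasure μ] [InnerRegularCompactLTTop μ] {s : Set X}
    (hs : MeasurableSet s) :
    ∃ t ⊆ s, IsSigmaCompact t ∧ μ (s \ t) = 0 := by
  choose K hKs hK hμK using fun n : ℕ =>
    hs.exists_isCompact_sdiff_lt (measure_ne_top μ s)
      (ENNReal.inv_ne_zero.2 (ENNReal.natCast_ne_top n))
  refine ⟨⋃ n, K n, iUnion_subset hKs, isSigmaCompact_iUnion_of_isCompact K hK, ?_⟩
  refine nonpos_iff_eq_zero.1 (ge_of_tendsto' ENNReal.tendsto_inv_nat_nhds_zero fun n => ?_)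
  exact (measure_mono (sdiff_subset_sdiff_right (subset_iUnion K n))).trans (hμK n).le

theorem MeasurableSet.exists_isSigmaCompact_subset_measure_sdiff_eq_zero
    [T2Space X] [SigmaFinite μ] [InnerRegularCompactLTTop μ] {s : Set X} (hs : MeasurableSet s) :
    ∃ t ⊆ s, IsSigmaCompact t ∧ μ (s \ t) = 0 := by
  have (n : ℕ) : ∃ t ⊆ s, IsSigmaCompact t ∧ μ.restrict (spanningSets μ n) (s \ t) = 0 :=
    have : IsFiniteMeasure (μ.restrict (spanningSets μ n)) :=
      isFiniteMeasure_restrict.2 (measure_spanningSets_lt_top μ n).ne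
    hs.exists_isSigmaCompact_subset_measure_sdiff_eq_zero_of_isFiniteMeasure
  choose t hts ht hμt using this
  refine ⟨⋃ n, t n, iUnion_subset hts, isSigmaCompact_iUnion t ht, ?_⟩
  refine measure_mono_null (t := ⋃ n, (s \ t n) ∩ spanningSets μ n) ?_
    (measure_iUnion_null fun n => ?_)
  · intro x hx
    obtain ⟨n, hn⟩ := mem_iUnion.1 (iUnion_spanningSets μ ▸ mem_univ x)
    exact mem_iUnion.2 ⟨n, ⟨hx.1, fun hxt => hx.2 (mem_iUnion.2 ⟨n, hxt⟩)⟩, hn⟩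
  · rw [← restrict_apply' (measurableSet_spanningSets μ n)]
    exact hμt n

theorem MeasureTheory.NullMeasurableSet.exists_isSigmaCompact_subset_measure_sdiff_eq_zero
    [T2Space X] [SigmaFinite μ] [InnerRegularCompactLTTop μ] {s : Set X}
    (hs : NullMeasurableSet s μ) :
    ∃ t ⊆ s, IsSigmaCompact t ∧ μ (s \ t) = 0 := by
  obtain ⟨u, hus, hu, hsu⟩ := hs.exists_measurable_subset_ae_eq
  obtain ⟨t, htu, ht, hμt⟩ := hu.exists_isSigmaCompact_subset_measure_sdiff_eq_zero (μ := μ)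
  refine ⟨t, htu.trans hus, ht, measure_mono_null ?_ (measure_union_null (ae_eq_set.1 hsu).2 hμt)⟩
  intro x hx
  by_cases hxu : x ∈ u
  · exact Or.inr ⟨hxu, hx.2⟩
  · exact Or.inl ⟨hx.1, hxu⟩

theorem MeasureTheory.Measure.map_apply_of_isClosedMap [OuterRegular μ] {f : X → Y}
    (hf : Continuous f) (hfc : IsClosedMap f) (t : Set Y) :
    μ.map f t = μ (f ⁻¹' t) := by
  refine le_antisymm ?_ (le_map_apply hf.aemeasurable t)
  rw [Set.measure_eq_iInf_isOpen (f ⁻¹' t)]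
  refine le_iInf₂ fun U hU => le_iInf fun hUo => ?_
  have hW : IsOpen (f '' Uᶜ)ᶜ := (hfc _ hUo.isClosed_compl).isOpen_compl
  calc μ.map f t ≤ μ.map f (f '' Uᶜ)ᶜ := by
        refine measure_mono fun y hy ⟨x, hxU, hxy⟩ => hxU (hU ?_)
        rwa [mem_preimage, hxy]
    _ = μ (f ⁻¹' (f '' Uᶜ)ᶜ) := map_apply hf.measurable hW.measurableSet
    _ ≤ μ U := measure_mono fun x hx => by_contra fun hxU => hx ⟨x, hxU, rfl⟩

theorem MeasureTheory.NullMeasurableSet.image_of_isClosedMap [T2Space X] [T2Space Y]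
    [OuterRegular μ] [InnerRegularCompactLTTop μ] [SigmaFinite μ] {f : X → Y} (hf : Continuous f)
    (hfc : IsClosedMap f) {s : Set X} (hs : NullMeasurableSet s μ) (hsat : f ⁻¹' (f '' s) = s) :
    NullMeasurableSet (f '' s) (μ.map f) := by
  obtain ⟨t, hts, ht, hμt⟩ := hs.exists_isSigmaCompact_subset_measure_sdiff_eq_zero
  have hnull : μ.map f (f '' s \ f '' t) = 0 := by
    rw [map_apply_of_isClosedMap hf hfc, preimage_sdiff, hsat]
    exact measure_mono_null (sdiff_subset_sdiff_right (subset_preimage_image f t)) hμt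
  rw [← union_sdiff_cancel (image_mono hts)]
  exact (ht.image hf).measurableSet.nullMeasurableSet.union_null hnull

end Regular

/-- Let `G` be a σ-compact locally compact group, `K` a compact normal subgroup of `G`, and
`π : G → G/K` the canonical quotient map. If `A ⊆ G` satisfies `A = AK`, then `A` is Haar
measurable in `G` iff `π(A)` is Haar measurable in `G/K`. -/
theorem stmt_0 {G : Type*} [Group G] [TopologicalSpace G] [IsTopologicalGroup G]
    [T2Space G] [LocallyCompactSpace G] [SigmaCompactSpace G]
    [MeasurableSpace G] [BorelSpace G]
    (μ : Measure G) [μ.IsHaarMeasure]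
    (K : Subgroup G) [K.Normal] (hK : IsCompact (K : Set G))
    [MeasurableSpace (G ⧸ K)] [BorelSpace (G ⧸ K)]
    (ν : Measure (G ⧸ K)) [ν.IsHaarMeasure]
    (A : Set G) (hA : A * (K : Set G) = A) :
    NullMeasurableSet A μ ↔ NullMeasurableSet (QuotientGroup.mk '' A : Set (G ⧸ K)) ν := by
  -- gives the `T3Space (G ⧸ K)` instance
  have : IsClosed (K : Set G) := hK.isClosed
  have hproper := QuotientGroup.isProperMap_coe hK
  have : SigmaCompactSpace (G ⧸ K) := isSigmaCompact_univ_iff.1 <| by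
    simpa [QuotientGroup.mk_surjective.range_eq] using isSigmaCompact_univ.image hproper.continuous
  have : (haar.map ((↑) : G → G ⧸ K)).IsHaarMeasure :=
    isHaarMeasure_map haar (QuotientGroup.mk' K) hproper.continuous QuotientGroup.mk_surjective
      (isProperMap_iff_tendsto_cocompact.1 hproper).2
  have hsat : ((↑) : G → G ⧸ K) ⁻¹' (((↑) : G → G ⧸ K) '' A) = A := by
    rw [QuotientGroup.preimage_image_mk_eq_mul, hA]
  rw [nullMeasurableSet_iff_of_isHaarMeasure μ haar,
    nullMeasurableSet_iff_of_isHaarMeasure ν (haar.map ((↑) : G → G ⧸ K))]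
  refine ⟨fun h => ?_, fun h => ?_⟩
  · exact h.image_of_isClosedMap hproper.continuous (QuotientGroup.isClosedMap_coe hK) hsat
  · simpa [hsat] using h.preimage (hproper.continuous.measurable.quasiMeasurePreserving haar)
end

section
/- Let (A_s)_{s ∈ S} with S ⊆ ℝ be a point-finite family of subsets of a set X. For rationals enumerated as (q_m) and n ∈ ℕ, define W_{mn} = ⋃{A_s : |s − q_m| < 1/n}. Then for every s ∈ S, choosing sequences m_k, n_k with q_{m_k} → s and n_k → ∞, one has A_s = ⋂_k W_{m_k n_k}. -/
open Filter Topology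

/-!
A point `x` of the intersection lies, for every `k`, in some `A (t k)` with `t k ∈ S` within
`1/n k` of `q (m k)`, hence within `2/n k` of `s`; so `t k → s`. All the `t k` lie in the finite,
hence closed, set `{t ∈ S | x ∈ A t}`, which therefore contains the limit `s`.
-/

theorem tendsto_of_dist_lt_of_dist_lt {α : Type*} [PseudoMetricSpace α] {l : Filter ℕ}
    {t c : ℕ → α} {s : α} {r : ℕ → ℝ} (hr : Tendsto r l (𝓝 0))
    (ht : ∀ k, dist (t k) (c k) < r k) (hs : ∀ k, dist s (c k) < r k) :
    Tendsto t l (𝓝 s) := by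
  rw [tendsto_iff_dist_tendsto_zero]
  refine squeeze_zero (fun _ => dist_nonneg) (fun k => ?_) (by simpa using hr.const_mul 2)
  calc dist (t k) s ≤ dist (t k) (c k) + dist s (c k) := dist_triangle_right _ _ _
    _ ≤ 2 * r k := by linarith [ht k, hs k]

theorem mem_of_tendsto_of_finite {ι X : Type*} [TopologicalSpace ι] [T1Space ι]
    {S : Set ι} {A : ι → Set X} {x : X} (hfin : {s ∈ S | x ∈ A s}.Finite)
    {l : Filter ℕ} [l.NeBot] {t : ℕ → ι} {s : ι} (hlim : Tendsto t l (𝓝 s))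
    (ht : ∀ k, t k ∈ S ∧ x ∈ A (t k)) : x ∈ A s :=
  (hfin.isClosed.mem_of_tendsto hlim (Eventually.of_forall ht)).2

theorem eq_iInter_biUnion_ball_of_pointFinite {ι X : Type*} [MetricSpace ι]
    {S : Set ι} {A : ι → Set X} (hpf : ∀ x : X, {s ∈ S | x ∈ A s}.Finite)
    {s : ι} (hs : s ∈ S) {c : ℕ → ι} {r : ℕ → ℝ} (hr : Tendsto r atTop (𝓝 0))
    (hsc : ∀ k, dist s (c k) < r k) :
    A s = ⋂ k, ⋃ t ∈ {t ∈ S | dist t (c k) < r k}, A t := by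
  refine (Set.subset_iInter fun k => Set.subset_biUnion_of_mem (u := A)
    (show s ∈ {t ∈ S | dist t (c k) < r k} from ⟨hs, hsc k⟩)).antisymm ?_
  intro x hx
  simp only [Set.mem_iInter, Set.mem_iUnion, Set.mem_ofPred_eq, exists_prop] at hx
  choose t ht hxt using hx
  exact mem_of_tendsto_of_finite (hpf x)
    (tendsto_of_dist_lt_of_dist_lt hr (fun k => (ht k).2) hsc) fun k => ⟨(ht k).1, hxt k⟩

theorem stmt_8_general {X : Type*} (S : Set ℝ) (A : ℝ → Set X)
    (hpf : ∀ x : X, {s ∈ S | x ∈ A s}.Finite)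
    (q : ℕ → ℚ)
    (s : ℝ) (hs : s ∈ S) (m n : ℕ → ℕ) (hn : StrictMono n)
    (hclose : ∀ k, |s - (q (m k) : ℝ)| < 1 / (n k : ℝ)) :
    A s = ⋂ k : ℕ, ⋃ t ∈ {t ∈ S | |t - (q (m k) : ℝ)| < 1 / (n k : ℝ)}, A t := by
  simp only [← Real.dist_eq] at hclose ⊢
  exact eq_iInter_biUnion_ball_of_pointFinite hpf hs
    (tendsto_one_div_atTop_nhds_zero_nat.comp hn.tendsto_atTop) hclose

/-- Let `(A s)_{s ∈ S}`, `S ⊆ ℝ`, be a point-finite family of subsets of `X`, let `q` be an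
enumeration of the rationals and `W m n = ⋃ {A t : t ∈ S, |t − q m| < 1/n}`. If `m k`, `n k`
are sequences with `n` strictly increasing (hence `n k → ∞`) and `|s − q (m k)| < 1/(n k)`
(hence `q (m k) → s`), then `A s = ⋂ k, W (m k) (n k)`. -/
theorem stmt_8 {X : Type*} (S : Set ℝ) (A : ℝ → Set X)
    (hpf : ∀ x : X, {s ∈ S | x ∈ A s}.Finite)
    (q : ℕ → ℚ) (hq : Function.Bijective q)
    (s : ℝ) (hs : s ∈ S) (m n : ℕ → ℕ) (hn : StrictMono n)
    (hclose : ∀ k, |s - (q (m k) : ℝ)| < 1 / (n k : ℝ)) :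
    A s = ⋂ k : ℕ, ⋃ t ∈ {t ∈ S | |t - (q (m k) : ℝ)| < 1 / (n k : ℝ)}, A t :=
  stmt_8_general S A hpf q s hs m n hn hclose
end

section
/- Assume Martin's Axiom (or just: the additivity of the null ideal equals the continuum). Let G be a locally compact Polish group and S ⊆ G a nonempty set of Haar measure zero. Then there exists a set A ⊆ G such that AS = {as : a ∈ A, s ∈ S} is not Haar measurable. -/
/-!
Enumerate the compact sets of positive Haar measure as `(K_x)_{x < 𝔠}` and choose, by
transfinite recursion, points `a_x` with `a_x s₀ ∈ K_x` (for a fixed `s₀ ∈ S`) and `b_x ∈ K_x`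
such that no `b_x` lies in any `a_y S`. At stage `x` only fewer than `𝔠` translates of the null
sets `S` and `S⁻¹` have to be avoided, and their union is null by the additivity hypothesis, so
the choices exist. Then `A = {a_x}` makes `AS` and its complement meet every compact set of
positive measure, which inner regularity forbids for a null-measurable set.
-/

open MeasureTheory Pointwise Set Cardinal

universe u

theorem MeasurableSpace.cardinal_measurableSet_le_continuum_of_countablyGenerated
    (α : Type*) [MeasurableSpace α] [MeasurableSpace.CountablyGenerated α] :
    #{s : Set α | MeasurableSet s} ≤ 𝔠 := by
  have := cardinal_measurableSet_le_continuum
    ((countable_countableGeneratingSet (α := α)).le_aleph0.trans aleph0_le_continuum)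
  rwa [generateFrom_countableGeneratingSet] at this

theorem Set.exists_range_eq_of_mk_le {α β : Type u} {s : Set α} (hs : s.Nonempty)
    (h : #s ≤ #β) : ∃ k : β → α, range k = s := by
  obtain ⟨f⟩ := Cardinal.le_def _ _ |>.1 h
  have := hs.to_subtype
  refine ⟨fun y => (Function.invFun f y : s), ?_⟩
  rw [range_comp' Subtype.val, (Function.invFun_surjective f.injective).range_eq, image_univ,
    Subtype.range_coe]

theorem WellFoundedLT.exists_forall_choice {T β : Type*} [Preorder T] [WellFoundedLT T]
    (P : ∀ x : T, (Iio x → β) → β → Prop) (h : ∀ x prev, ∃ b, P x prev b) :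
    ∃ f : T → β, ∀ x, P x (fun y => f y) (f x) := by
  choose g hg using h
  refine ⟨WellFoundedLT.fix fun x prev => g x fun y => prev y y.2, fun x => ?_⟩
  rw [WellFoundedLT.fix_eq]
  exact hg _ _

theorem MeasureTheory.nonempty_diff_of_measure_ne_zero {α : Type*} [MeasurableSpace α]
    {μ : Measure α} {s t : Set α} (hs : μ s ≠ 0) (ht : μ t = 0) : (s \ t).Nonempty :=
  nonempty_iff_ne_empty.2 fun h => hs (measure_mono_null (sdiff_eq_empty.1 h) ht)

section InnerRegular

variable {X : Type*} [TopologicalSpace X] [MeasurableSpace X] {μ : Measure X} [μ.InnerRegular]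
  {M : Set X}

theorem MeasureTheory.NullMeasurableSet.measure_eq_zero_of_forall_isCompact_diff_nonempty
    (hM : NullMeasurableSet M μ) (h : ∀ K, IsCompact K → μ K ≠ 0 → (K \ M).Nonempty) :
    μ M = 0 := by
  obtain ⟨t, htM, ht, htae⟩ := hM.exists_measurable_subset_ae_eq
  rw [← measure_congr htae]
  by_contra hpos
  obtain ⟨K, hKt, hK, hKpos⟩ := ht.exists_lt_isCompact (pos_iff_ne_zero.2 hpos)
  obtain ⟨x, hxK, hxM⟩ := h K hK hKpos.ne'
  exact hxM (htM (hKt hxK))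

theorem MeasureTheory.not_nullMeasurableSet_of_forall_isCompact (hμ : μ ≠ 0)
    (hin : ∀ K, IsCompact K → μ K ≠ 0 → (K ∩ M).Nonempty)
    (hout : ∀ K, IsCompact K → μ K ≠ 0 → (K \ M).Nonempty) :
    ¬ NullMeasurableSet M μ := by
  intro hM
  have hM0 := hM.measure_eq_zero_of_forall_isCompact_diff_nonempty hout
  have hMc0 := hM.compl.measure_eq_zero_of_forall_isCompact_diff_nonempty
    (by simpa only [sdiff_compl] using hin)
  apply hμ
  rw [← Measure.measure_univ_eq_zero, ← union_compl_self M]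
  exact measure_union_null hM0 hMc0

end InnerRegular

theorem MeasureTheory.exists_translates_avoiding {G : Type*} [Group G] [MeasurableSpace G]
    [MeasurableMul₂ G] [MeasurableInv G] {μ : Measure G} [SFinite μ] [μ.IsMulLeftInvariant]
    {T : Type*} [LinearOrder T] [WellFoundedLT T]
    (hsmall : ∀ (x : T) (N : Iio x → Set G), (∀ y, μ (N y) = 0) → μ (⋃ y, N y) = 0)
    {S : Set G} (hS0 : μ S = 0) (s₀ : G) (k : T → Set G) (hk : ∀ x, μ (k x) ≠ 0) :
    ∃ a b : T → G, (∀ x, a x * s₀ ∈ k x) ∧ (∀ x, b x ∈ k x) ∧ ∀ x y, b x ∉ a y • S := by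
  have hSinv : μ S⁻¹ = 0 := (measure_inv_null μ).2 hS0
  obtain ⟨f, hf⟩ := WellFoundedLT.exists_forall_choice
    (fun x (prev : Iio x → G × G) (p : G × G) =>
      p.1 ∈ (· * s₀) ⁻¹' k x \ ⋃ y, (prev y).2 • S⁻¹ ∧
        p.2 ∈ k x \ (p.1 • S ∪ ⋃ y, (prev y).1 • S))
    fun x prev => by
      obtain ⟨a, ha⟩ := nonempty_diff_of_measure_ne_zero
        ((measure_mul_right_null μ s₀).not.2 (hk x))
        (hsmall x (fun y => (prev y).2 • S⁻¹) fun _ => (measure_smul μ _ _).trans hSinv)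
      obtain ⟨b, hb⟩ := nonempty_diff_of_measure_ne_zero (hk x)
        (measure_union_null ((measure_smul μ a S).trans hS0)
          (hsmall x (fun y => (prev y).1 • S) fun _ => (measure_smul μ _ _).trans hS0))
      exact ⟨(a, b), ha, hb⟩
  refine ⟨fun x => (f x).1, fun x => (f x).2, fun x => (hf x).1.1, fun x => (hf x).2.1,
    fun x y hxy => ?_⟩
  rcases lt_trichotomy x y with hlt | rfl | hgt
  · -- `b ∈ a • S ↔ a ∈ b • S⁻¹`
    exact (hf y).1.2 (mem_iUnion.2 ⟨⟨x, hlt⟩, by simpa using hxy⟩)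
  · exact (hf x).2.2 (Or.inl hxy)
  · exact (hf x).2.2 (Or.inr (mem_iUnion.2 ⟨⟨y, hgt⟩, hxy⟩))

/-- (Under Martin's Axiom, stated here via its consequence that the additivity of the Haar
null ideal equals the continuum.) If `G` is a locally compact Polish group and `S ⊆ G` is a
nonempty set of Haar measure zero, then there is `A ⊆ G` with `A * S` not Haar measurable. -/
theorem stmt_10 {G : Type*} [Group G] [TopologicalSpace G] [IsTopologicalGroup G]
    [PolishSpace G] [LocallyCompactSpace G] [MeasurableSpace G] [BorelSpace G]
    (μ : Measure G) [μ.IsHaarMeasure]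
    (hMA : ∀ 𝒥 : Set (Set G), Cardinal.mk 𝒥 < Cardinal.continuum →
      (∀ J ∈ 𝒥, μ J = 0) → μ (⋃₀ 𝒥) = 0)
    (S : Set G) (hS : S.Nonempty) (hS0 : μ S = 0) :
    ∃ A : Set G, ¬ NullMeasurableSet (A * S) μ := by
  obtain ⟨s₀, hs₀⟩ := hS
  let T := Cardinal.continuum.{u_1}.ord.ToType
  let 𝒦 : Set (Set G) := {K | IsCompact K ∧ μ K ≠ 0}
  have h𝒦 : 𝒦.Nonempty := by
    obtain ⟨K, -, hK, hK0⟩ := MeasurableSet.univ.exists_lt_isCompact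
      (pos_iff_ne_zero.2 (Measure.measure_univ_ne_zero.2 (NeZero.ne μ)))
    exact ⟨K, hK, hK0.ne'⟩
  have h𝒦_card : #𝒦 ≤ #T := by
    rw [mk_ord_toType]
    exact (mk_le_mk_of_subset fun K hK => hK.1.measurableSet).trans
      (MeasurableSpace.cardinal_measurableSet_le_continuum_of_countablyGenerated G)
  obtain ⟨k, hk⟩ := exists_range_eq_of_mk_le h𝒦 h𝒦_card
  have hsmall (x : T) (N : Iio x → Set G) (hN : ∀ y, μ (N y) = 0) :
      μ (⋃ y, N y) = 0 := by
    rw [← sUnion_range]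
    exact hMA _ (mk_range_le.trans_lt (by simpa [T] using mk_Iio_lt x)) (forall_mem_range.2 hN)
  obtain ⟨a, b, ha, hb, hab⟩ := exists_translates_avoiding hsmall hS0 s₀ k
    fun x => (hk ▸ mem_range_self x : k x ∈ 𝒦).2
  refine ⟨range a, not_nullMeasurableSet_of_forall_isCompact (NeZero.ne μ) ?_ ?_⟩ <;>
    intro K hK hK0 <;> obtain ⟨x, rfl⟩ : K ∈ range k := hk ▸ ⟨hK, hK0⟩
  · exact ⟨a x * s₀, ha x, mul_mem_mul (mem_range_self x) hs₀⟩
  · refine ⟨b x, hb x, ?_⟩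
    rintro ⟨_, ⟨y, rfl⟩, s, hs, hys⟩
    exact hab x y ⟨s, hs, hys⟩
end
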